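/- 1-SS masked attention dual of diagonal SSMs with full-rank state matrices: let M ∈ ℝ^{T×T} be lower triangular with M_{j,i} = c_jᵀ A^j A^{j-1} ⋯ A^{i+1} b_i for all 1 ≤ i ≤ j ≤ T, where b_1,…,b_T, c_1,…,c_T ∈ ℝ^N and each A^t ∈ ℝ^{N×N} is diagonal with A^t_{n,n} ≠ 0 for all t ∈ {1,…,T} and n ∈ {1,…,N}. Then there exist B', C' ∈ ℝ^{T×N} such that M = L₁ ⊙ (C' B'ᵀ), where L₁ = 1SS(1,1,…,1) is the all-ones lower triangular matrix; explicitly one may take C'_{j,n} = (c_j)_n · Π_{s=1}^{j} A^s_{n,n} and B'_{i,n} = (b_i)_n / Π_{s=1}^{i} A^s_{n,n}. -/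

import Mathlib

open Matrix

/-- Ordered matrix product `matProd A i k = A (i+k) * A (i+k-1) * ⋯ * A (i+1)`,
so that `matProd A i (j - i) = A^j ⋯ A^{i+1}` (the identity when `j = i`). -/
noncomputable def matProd {N : ℕ} (A : ℕ → Matrix (Fin N) (Fin N) ℝ) (i : ℕ) :
    ℕ → Matrix (Fin N) (Fin N) ℝ
  | 0 => 1
  | k + 1 => A (i + k + 1) * matProd A i k

/-- `oneSS a t s = a_t ⋯ a_{s+1}` for `s ≤ t` (empty product `1` when `s = t`) and `0` otherwise:
the `(t,s)` entry of the 1-semiseparable matrix `1SS(a)`.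
In particular `oneSS (fun _ => 1)` is the all-ones lower triangular mask `L₁ = 1SS(1,…,1)`. -/
noncomputable def oneSS (a : ℕ → ℝ) (t s : ℕ) : ℝ :=
  if s ≤ t then ∏ k ∈ Finset.Ioc s t, a k else 0


private lemma matProd_diag {N : ℕ} (A : ℕ → Matrix (Fin N) (Fin N) ℝ) (i : ℕ) :
    ∀ k, (∀ s, i < s → s ≤ i + k → (A s).IsDiag) →
      matProd A i k = Matrix.diagonal (fun n => ∏ s ∈ Finset.Ioc i (i + k), A s n n)
  | 0, _ => by simp [matProd]
  | k + 1, h => by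
    have ih := matProd_diag A i k (fun s hs hs' => h s hs (by omega))
    have hA : A (i + k + 1) = Matrix.diagonal (fun n => A (i + k + 1) n n) := by
      have := h (i + k + 1) (by omega) (by omega)
      exact ((Matrix.isDiag_iff_diagonal_diag _).mp this).symm
    rw [matProd, ih, hA, Matrix.diagonal_mul_diagonal]
    have : (fun n => A (i + k + 1) n n * ∏ s ∈ Finset.Ioc i (i + k), A s n n)
        = fun n => ∏ s ∈ Finset.Ioc i (i + (k + 1)), A s n n := by
      funext n
      rw [show i + (k + 1) = (i + k) + 1 by omega,
        Finset.prod_Ioc_succ_top (by omega : i ≤ i + k)]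
      ring
    rw [this]

/-- **1-SS masked attention dual of full-rank diagonal SSMs.**
If `M_{j,i} = c_jᵀ A^j ⋯ A^{i+1} b_i` with each `A^t` diagonal and all diagonal entries
nonzero, then `M = L₁ ⊙ (C' B'ᵀ)` for some `B', C' ∈ ℝ^{T×N}`; explicitly one may take
`C'_{j,n} = (c_j)_n · Π_{s=1}^{j} A^s_{n,n}` and `B'_{i,n} = (b_i)_n / Π_{s=1}^{i} A^s_{n,n}`. -/
theorem full_rank_diagonal_ssd (T N : ℕ)
    (A : ℕ → Matrix (Fin N) (Fin N) ℝ)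
    (hdiag : ∀ t, 1 ≤ t → t ≤ T → (A t).IsDiag)
    (hfull : ∀ t, 1 ≤ t → t ≤ T → ∀ n : Fin N, A t n n ≠ 0)
    (b c : ℕ → Fin N → ℝ) (M : ℕ → ℕ → ℝ)
    (hM : ∀ i j, 1 ≤ i → i ≤ j → j ≤ T →
      M j i = c j ⬝ᵥ (matProd A i (j - i)).mulVec (b i))
    (hlow : ∀ i j, 1 ≤ j → j < i → i ≤ T → M j i = 0) :
    ∃ B' C' : ℕ → Fin N → ℝ,
      (∀ j, 1 ≤ j → j ≤ T → ∀ n : Fin N,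
        C' j n = c j n * ∏ s ∈ Finset.Icc 1 j, A s n n) ∧
      (∀ i, 1 ≤ i → i ≤ T → ∀ n : Fin N,
        B' i n = b i n / ∏ s ∈ Finset.Icc 1 i, A s n n) ∧
      (∀ i j, 1 ≤ i → i ≤ T → 1 ≤ j → j ≤ T →
        M j i = oneSS (fun _ => (1 : ℝ)) j i * ∑ n : Fin N, C' j n * B' i n) := by
  refine ⟨fun i n => b i n / ∏ s ∈ Finset.Icc 1 i, A s n n,
    fun j n => c j n * ∏ s ∈ Finset.Icc 1 j, A s n n,
    fun _ _ _ _ => rfl, fun _ _ _ _ => rfl, ?_⟩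
  intro i j hi hiT hj hjT
  rcases le_or_gt i j with hij | hij
  · have hprod : matProd A i (j - i)
        = Matrix.diagonal (fun n => ∏ s ∈ Finset.Ioc i j, A s n n) := by
      have := matProd_diag A i (j - i) (fun s hs hs' => hdiag s (by omega) (by omega))
      rwa [show i + (j - i) = j by omega] at this
    rw [hM i j hi hij hjT, hprod]
    have h1 : oneSS (fun _ => (1 : ℝ)) j i = 1 := by simp [oneSS, hij]
    rw [h1, one_mul]
    simp only [Matrix.mulVec_diagonal, dotProduct]
    refine Finset.sum_congr rfl fun n _ => ?_
    have hIcc : ∀ m : ℕ, Finset.Icc 1 m = Finset.Ioc 0 m := fun m => by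
      exact Finset.Icc_add_one_left_eq_Ioc 0 m
    have hsplit : (∏ s ∈ Finset.Ioc 0 i, A s n n) * ∏ s ∈ Finset.Ioc i j, A s n n
        = ∏ s ∈ Finset.Ioc 0 j, A s n n :=
      Finset.prod_Ioc_consecutive _ (by omega) hij
    have hne : (∏ s ∈ Finset.Ioc 0 i, A s n n) ≠ 0 := by
      refine Finset.prod_ne_zero_iff.mpr fun s hs => ?_
      simp only [Finset.mem_Ioc] at hs
      exact hfull s (by omega) (by omega) n
    rw [hIcc, hIcc]
    field_simp
    rw [← hsplit]
    ring
  · rw [hlow i j hj hij hiT]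
    simp [oneSS, Nat.not_le.mpr hij]
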